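/- For every integer m ≥ 1, let r_n = Σ_{k=0}^{n} B_m(n,k) be the n-th row sum of the m-th triangle of the first family. Then for every n ≥ m, r_n = r_{n−1} + r_{n−2} + ⋯ + r_{n−m+1} + 2·r_{n−m}. -/

import Mathlib

/-- The `m`-th Pascal-like triangle of the first family: `B m n 0 = 1`,
`B m n n = 1` if `m ∣ n` and `0` otherwise, and Pascal's recurrence
`B m n k = B m (n-1) k + B m (n-1) (k-1)` for `0 < k < n`.
(Values with `k > n` are set to `0`.) -/
def B (m : ℕ) : ℕ → ℕ → ℕ
  | _, 0 => 1
  | 0, _ + 1 => 0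
  | n + 1, k + 1 =>
      if n + 1 = k + 1 then (if m ∣ (n + 1) then 1 else 0)
      else if n + 1 < k + 1 then 0
      else B m n (k + 1) + B m n k

/-!
By Pascal's rule every entry of row `j` contributes twice to the sum of row `j + 1`, except that
the diagonal entries are `[m ∣ j]` rather than given by the rule; hence
`r (j + 1) + [m ∣ j] = 2 r j + [m ∣ j + 1]`. Summed over the window `n - m ≤ j < n`, the
indicator terms cancel because `[m ∣ n - m] = [m ∣ n]`, and what remains is the recurrence.
-/

section Telescoping

variable {M : Type*} [AddCancelCommMonoid M]

theorem Finset.sum_Ico_comp_succ_eq_of_eq {c : ℕ → M} {a b : ℕ} (hab : a ≤ b)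
    (hc : c a = c b) :
    ∑ j ∈ Finset.Ico a b, c (j + 1) = ∑ j ∈ Finset.Ico a b, c j := by
  apply add_left_cancel (a := c a)
  calc c a + ∑ j ∈ Finset.Ico a b, c (j + 1)
      = ∑ j ∈ Finset.Ico a (b + 1), c j := by
        rw [Finset.sum_Ico_add', Finset.sum_eq_sum_Ico_succ_bot (show a < b + 1 by omega) c]
    _ = c a + ∑ j ∈ Finset.Ico a b, c j := by
        rw [Finset.sum_Ico_succ_top hab, hc, add_comm]

theorem eq_sum_Ico_add_two_nsmul_of_succ_add {r c : ℕ → M}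
    (h : ∀ j, r (j + 1) + c j = 2 • r j + c (j + 1)) {m n : ℕ} (hm : 1 ≤ m) (hmn : m ≤ n)
    (hc : c (n - m) = c n) :
    r n = ∑ i ∈ Finset.Ico 1 m, r (n - i) + 2 • r (n - m) := by
  set a := n - m
  have hwindow : ∑ j ∈ Finset.Ico (a + 1) n, r j = ∑ i ∈ Finset.Ico 1 m, r (n - i) := by
    rw [Finset.sum_Ico_reflect _ _ (by omega)]
    congr 2; omega
  have hsum : ∑ j ∈ Finset.Ico a n, r (j + 1) = 2 • ∑ j ∈ Finset.Ico a n, r j := by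
    have := Finset.sum_congr rfl fun j (_ : j ∈ Finset.Ico a n) => h j
    rw [Finset.sum_add_distrib, Finset.sum_add_distrib,
      Finset.sum_Ico_comp_succ_eq_of_eq (by omega) hc, ← Finset.smul_sum] at this
    exact add_right_cancel this
  rw [Finset.sum_Ico_add', Finset.sum_Ico_succ_top (by omega),
    Finset.sum_eq_sum_Ico_succ_bot (show a < n by omega), smul_add,
    two_nsmul (∑ _ ∈ _, _)] at hsum
  rw [← hwindow]
  exact add_left_cancel (hsum.trans (by abel))

end Telescoping

section Triangle

variable (m : ℕ)

theorem B_zero_right (n : ℕ) : B m n 0 = 1 := by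
  cases n <;> simp [B]

theorem B_self (n : ℕ) : B m n n = if m ∣ n then 1 else 0 := by
  cases n <;> simp [B]

theorem B_succ_succ {n k : ℕ} (h : k < n) : B m (n + 1) (k + 1) = B m n (k + 1) + B m n k := by
  simp [B, show n ≠ k by omega, show ¬n < k by omega]

def rowSum (n : ℕ) : ℕ := ∑ k ∈ Finset.range (n + 1), B m n k

theorem rowSum_succ_add (n : ℕ) :
    rowSum m (n + 1) + (if m ∣ n then 1 else 0) =
      2 * rowSum m n + (if m ∣ n + 1 then 1 else 0) := by
  have hinterior : ∑ k ∈ Finset.range n, B m (n + 1) (k + 1)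
      = ∑ k ∈ Finset.range n, B m n (k + 1) + ∑ k ∈ Finset.range n, B m n k := by
    rw [← Finset.sum_add_distrib]
    exact Finset.sum_congr rfl fun k hk => B_succ_succ m (Finset.mem_range.mp hk)
  have hleft : rowSum m n = ∑ k ∈ Finset.range n, B m n (k + 1) + 1 := by
    rw [rowSum, Finset.sum_range_succ', B_zero_right]
  have hright : rowSum m n = ∑ k ∈ Finset.range n, B m n k + (if m ∣ n then 1 else 0) := by
    rw [rowSum, Finset.sum_range_succ, B_self]
  rw [rowSum, Finset.sum_range_succ', Finset.sum_range_succ, hinterior, B_self, B_zero_right]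
  omega

end Triangle

/-- Row sums of the `m`-th triangle satisfy
`r n = r (n-1) + ⋯ + r (n-m+1) + 2 * r (n-m)` for `n ≥ m`. -/
theorem stmt_4 (m : ℕ) (hm : 1 ≤ m) (r : ℕ → ℕ)
    (hr : ∀ n, r n = ∑ k ∈ Finset.range (n + 1), B m n k)
    (n : ℕ) (hn : m ≤ n) :
    r n = (∑ i ∈ Finset.Ico 1 m, r (n - i)) + 2 * r (n - m) := by
  obtain rfl : r = rowSum m := funext hr
  have hperiodic : (if m ∣ n - m then 1 else 0) = if m ∣ n then 1 else 0 := by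
    simp only [Nat.dvd_sub_iff_left hn dvd_rfl]
  simpa using eq_sum_Ico_add_two_nsmul_of_succ_add (rowSum_succ_add m) hm hn hperiodic
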